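/- arXiv:2401.13255 — 5 statements merged into one kernel-verified Lean document; each statement's English description precedes it below -/
import Mathlib

section
/- Let C = (p,q,ω,u) be an arithmetic channel and for a nonnegative integer k define the vanishing set I_k(C) = { e ∈ Z_q[X]/(u) : ι_q(⟦C⟧(e)) ∈ {0, p, ..., kp} }. If e₁ ∈ I_{k₁}(C), e₂ ∈ I_{k₂}(C), and k₁ + k₂ < q/p, then e₁ + e₂ ∈ I_{k₁+k₂}(C). -/
open Polynomial

/-- An arithmetic channel `C = (p, q, ω, u)`: positive integers `p < q`, `ω`, and a
polynomial `u ∈ ℤ[X]` with `u(ω) ≡ 0 (mod q)`. -/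
structure ArithChannel where
  p : ℕ
  q : ℕ
  ω : ℕ
  u : Polynomial ℤ
  hp : 0 < p
  hq : 0 < q
  hω : 0 < ω
  hpq : p < q
  hu : (q : ℤ) ∣ u.eval (ω : ℤ)

namespace ArithChannel

variable (C : ArithChannel)

/-- The quotient ring `Z_q[X]/(u)`. -/
abbrev Rq : Type :=
  Polynomial (ZMod C.q) ⧸ Ideal.span {C.u.map (Int.castRingHom (ZMod C.q))}

/-- The evaluation ring homomorphism `⟦C⟧ : Z_q[X]/(u) → Z_q`, `v ↦ v(ω)`. -/
noncomputable def ev : C.Rq →+* ZMod C.q :=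
  Ideal.Quotient.lift _ (Polynomial.evalRingHom ((C.ω : ZMod C.q)))
    (by
      intro a ha
      rw [Ideal.mem_span_singleton] at ha
      obtain ⟨b, rfl⟩ := ha
      have hω : ((C.ω : ℤ) : ZMod C.q) = ((C.ω : ZMod C.q)) := by push_cast; ring
      have h0 : (C.u.map (Int.castRingHom (ZMod C.q))).eval ((C.ω : ZMod C.q)) = 0 := by
        rw [← hω, Polynomial.eval_intCast_map]
        exact (ZMod.intCast_zmod_eq_zero_iff_dvd _ _).mpr C.hu
      simp only [Polynomial.coe_evalRingHom, Polynomial.eval_mul, h0, zero_mul])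

/-- The canonical map `ℤ[X] → Z_q[X]/(u)`. -/
noncomputable def toRq : Polynomial ℤ →+* C.Rq :=
  (Ideal.Quotient.mk _).comp (Polynomial.mapRingHom (Int.castRingHom (ZMod C.q)))

end ArithChannel

/-- `qfac q 0 = 1`, and for `i ≥ 1`, `qfac q i` is the `i`-th smallest prime factor of `q`. -/
noncomputable def qfac (q : ℕ) (i : ℕ) : ℕ :=
  if i = 0 then 1 else ((Nat.primeFactors q).sort (· ≤ ·)).getD (i - 1) 1

/-- `σ[q]_{i,j}` for an `n`-repartition `σ` of `q`. -/
noncomputable def sbrack (q : ℕ) {n : ℕ} (σ : Fin n → ℕ) (i j : Fin n) : ℕ :=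
  if σ i ≠ σ j then q / (qfac q (σ i) * qfac q (σ j)) else q / qfac q (σ i)

namespace ArithChannel

variable (C : ArithChannel)

/-- `E(C)`: sections of `⟦C⟧`. -/
def IsSection (r : ZMod C.q → C.Rq) : Prop := ∀ m, C.ev (r m) = m

/-- `e ∈ I_k(C)`: `ι_q(⟦C⟧(e)) ∈ {0, p, …, kp}`. -/
def InI (k : ℕ) (e : C.Rq) : Prop :=
  ∃ j : ℕ, j ≤ k ∧ ((C.ev e).val : ℤ) = (j : ℤ) * C.p

/-- `c ∈ σZ_q[X]_u`: each `⟦C⟧(c_i)` is a multiple of `q_{σ(i)}` in `Z_q`. -/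
def InSigma {n : ℕ} (σ : Fin n → ℕ) (c : Fin n → C.Rq) : Prop :=
  ∀ i, ∃ t : ZMod C.q, C.ev (c i) = (qfac C.q (σ i) : ZMod C.q) * t

/-- `(c, c') ∈ S^x_{C,k}(m|σ)`: the ACES encryption space. -/
def Enc {n : ℕ} (σ : Fin n → ℕ) (x : Fin n → Polynomial ℤ) (k : ℕ) (m : ZMod C.q)
    (c : Fin n → C.Rq) (c' : C.Rq) : Prop :=
  C.InSigma σ c ∧ ∃ r : ZMod C.q → C.Rq, C.IsSection r ∧ ∃ e : C.Rq,
    C.InI k e ∧ c' = r m + (∑ i, c i * C.toRq (x i)) + e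

/-- `S(ℓ) = Σᵢ ι_q(ℓᵢ)·ι_q(⟦C⟧(xᵢ))`, computed in `ℤ`. -/
noncomputable def Sdot {n : ℕ} (x : Fin n → Polynomial ℤ) (ℓ : Fin n → ZMod C.q) : ℤ :=
  ∑ i, ((ℓ i).val : ℤ) * ((C.ev (C.toRq (x i))).val : ℤ)

/-- The margin of `ℓ` relative to `x`. -/
noncomputable def marg {n : ℕ} (x : Fin n → Polynomial ℤ) (ℓ : Fin n → ZMod C.q) : ℚ :=
  (C.Sdot x ℓ : ℚ) / C.q - ⌊(C.Sdot x ℓ : ℚ) / C.q⌋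

/-- `ℓ ∈ L^k_{p,q}(x)`: the `k`-th space of `p`-locators relative to `x`. -/
noncomputable def IsLocator {n : ℕ} (x : Fin n → Polynomial ℤ) (k : ℤ)
    (ℓ : Fin n → ZMod C.q) : Prop :=
  (∑ i, ((C.ev (C.toRq (x i))).val : ℤ)) - ⌊(C.Sdot x ℓ : ℚ) / C.q⌋ = k * C.p

/-- `δ ∈ D^k_{p,q}(x)`: the `k`-th space of `p`-directors relative to `x`. -/
noncomputable def IsDirector {n : ℕ} (x : Fin n → Polynomial ℤ) (k : ℤ)
    (δ : Fin n → ZMod C.q) : Prop :=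
  ⌊(C.Sdot x δ : ℚ) / C.q⌋ = k * C.p

end ArithChannel

/-- If `e₁ ∈ I_{k₁}(C)`, `e₂ ∈ I_{k₂}(C)` and `k₁ + k₂ < q/p`, then
`e₁ + e₂ ∈ I_{k₁+k₂}(C)`. -/
theorem stmt5 (C : ArithChannel) (k₁ k₂ : ℕ) (e₁ e₂ : C.Rq)
    (h₁ : C.InI k₁ e₁) (h₂ : C.InI k₂ e₂)
    (h : (k₁ : ℚ) + (k₂ : ℚ) < (C.q : ℚ) / C.p) :
    C.InI (k₁ + k₂) (e₁ + e₂) := by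
  obtain ⟨j₁, hj₁, hv₁⟩ := h₁
  obtain ⟨j₂, hj₂, hv₂⟩ := h₂
  refine ⟨j₁ + j₂, Nat.add_le_add hj₁ hj₂, ?_⟩
  haveI : NeZero C.q := ⟨C.hq.ne'⟩
  have hp : (0:ℚ) < (C.p:ℚ) := by exact_mod_cast C.hp
  have hk : (k₁ + k₂) * C.p < C.q := by
    have h' : ((k₁ + k₂ : ℕ) : ℚ) * C.p < C.q := by
      push_cast
      calc ((k₁:ℚ) + k₂) * C.p < (C.q / C.p) * C.p := mul_lt_mul_of_pos_right h hp
        _ = C.q := div_mul_cancel₀ _ hp.ne'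
    exact_mod_cast h'
  have hjk : (j₁ + j₂) * C.p ≤ (k₁ + k₂) * C.p :=
    Nat.mul_le_mul_right _ (Nat.add_le_add hj₁ hj₂)
  have hlt : (j₁ + j₂) * C.p < C.q := lt_of_le_of_lt hjk hk
  have e1 : (C.ev e₁).val = j₁ * C.p := by exact_mod_cast hv₁
  have e2 : (C.ev e₂).val = j₂ * C.p := by exact_mod_cast hv₂
  have hval : (C.ev (e₁ + e₂)).val = (j₁ + j₂) * C.p := by
    rw [map_add, ZMod.val_add, e1, e2, Nat.mod_eq_of_lt (by rw [← add_mul]; exact hlt), add_mul]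
  rw [hval]; push_cast; ring
end

section
/- Let C = (p,q,ω,u) be an arithmetic channel, k₁, k₂ nonnegative integers, e₁ ∈ Z_q[X]/(u) with ι_q(⟦C⟧(e₁)) ∈ {0,1,...,k₁p}, and e₂ ∈ I_{k₂}(C). If k₁·k₂·p < q/p, then e₁·e₂ ∈ I_{k₁k₂p}(C). -/
open Polynomial

/-- If `ι_q(⟦C⟧(e₁)) ∈ {0,1,…,k₁p}`, `e₂ ∈ I_{k₂}(C)` and `k₁k₂p < q/p`, then
`e₁ · e₂ ∈ I_{k₁k₂p}(C)`. -/
theorem stmt6 (C : ArithChannel) (k₁ k₂ : ℕ) (e₁ e₂ : C.Rq)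
    (h₁ : (C.ev e₁).val ≤ k₁ * C.p) (h₂ : C.InI k₂ e₂)
    (h : ((k₁ * k₂ * C.p : ℕ) : ℚ) < (C.q : ℚ) / C.p) :
    C.InI (k₁ * k₂ * C.p) (e₁ * e₂) := by
  obtain ⟨j₂, hj₂, hval₂⟩ := h₂
  have hqz : NeZero C.q := ⟨C.hq.ne'⟩
  set a := (C.ev e₁).val with ha
  -- key bound: a * j₂ * C.p < C.q
  have hq : (k₁ * k₂ * C.p) * C.p < C.q := by
    have hp0 : (0:ℚ) < C.p := by exact_mod_cast C.hp
    have h' : ((k₁ * k₂ * C.p : ℕ) : ℚ) * C.p < C.q := by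
      have := (lt_div_iff₀ hp0).mp h
      exact_mod_cast this
    exact_mod_cast h'
  have hj2 : j₂ * C.p ≤ k₂ * C.p := Nat.mul_le_mul_right _ hj₂
  have hval₂' : (C.ev e₂).val = j₂ * C.p := by exact_mod_cast hval₂
  have hle : a * j₂ ≤ k₁ * k₂ * C.p := by
    calc a * j₂ ≤ (k₁ * C.p) * k₂ := Nat.mul_le_mul h₁ hj₂
    _ = k₁ * k₂ * C.p := by ring
  have hlt : a * (j₂ * C.p) < C.q := by
    calc a * (j₂ * C.p) = (a * j₂) * C.p := by ring
    _ ≤ (k₁ * k₂ * C.p) * C.p := Nat.mul_le_mul_right _ hle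
    _ < C.q := hq
  refine ⟨a * j₂, hle, ?_⟩
  have : (C.ev (e₁ * e₂)).val = a * (j₂ * C.p) := by
    rw [map_mul, ZMod.val_mul, hval₂', Nat.mod_eq_of_lt hlt]
  rw [this]; push_cast; ring
end

section
/- Let C = (p,q,ω,u) be an arithmetic channel, σ an n-repartition of q, x = (x₁,...,x_n) ∈ (Z[X])^n, and λ = (λ_{i,j}^k) ∈ H(x|C,σ), i.e. a 3-tensor over Z_q such that for each (i,j), the element e_{i,j} = x_i·x_j − Σ_k λ_{i,j}^k·x_k satisfies that ⟦C⟧(e_{i,j}) is a multiple of σ[q]_{i,j} in Z_q. Then for every pair (v₁, v₂) of vectors in σZ_q[X]_u (i.e. ⟦C⟧(v_{t,i}) is a multiple of q_{σ(i)} for all i), there exists e ∈ Z_q[X]/(u) with ⟦C⟧(e) = 0 such that (v₁ᵀx)·(v₂ᵀx) = (v₁ ⊠_λ v₂)ᵀ x + e, where v₁ ⊠_λ v₂ = ( Σ_{i,j} λ_{i,j}^k v_{1,i} v_{2,j} )_k. -/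
open Polynomial

/-! Expanding `(v₁ᵀx)(v₂ᵀx) = Σ_{i,j} v₁ᵢ v₂ⱼ xᵢxⱼ` and writing `xᵢxⱼ = Σₖ λᵢⱼᵏ xₖ + eᵢⱼ` leaves the
error `e = Σ_{i,j} v₁ᵢ v₂ⱼ eᵢⱼ`. Under `⟦C⟧` each summand becomes a multiple of
`q_{σ(i)} q_{σ(j)} σ[q]_{i,j}`, and this product is a multiple of `q`: each `q_{σ(i)}` is `1` or a
prime factor of `q`, and `q_{σ(i)} ≠ q_{σ(j)}` unless one is `1` or `σ(i) = σ(j)`. -/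

-- `getD` returns `1` past the end of the sorted list, so `qfac q i = 1` also for `i > #q.primeFactors`.
lemma qfac_eq_getElem_of_ne_one {q i : ℕ} (h : qfac q i ≠ 1) :
    ∃ hi : i - 1 < ((Nat.primeFactors q).sort (· ≤ ·)).length,
      i ≠ 0 ∧ qfac q i = ((Nat.primeFactors q).sort (· ≤ ·))[i - 1] := by
  unfold qfac at h ⊢
  split_ifs at h ⊢ with hi
  · exact absurd rfl h
  · by_cases hlt : i - 1 < ((Nat.primeFactors q).sort (· ≤ ·)).length
    · exact ⟨hlt, hi, List.getD_eq_getElem _ _ hlt⟩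
    · exact absurd (List.getD_eq_default _ _ (not_lt.mp hlt)) h

lemma qfac_mem_primeFactors {q i : ℕ} (h : qfac q i ≠ 1) : qfac q i ∈ Nat.primeFactors q := by
  obtain ⟨hi, -, heq⟩ := qfac_eq_getElem_of_ne_one h
  rw [heq, ← Finset.mem_sort (· ≤ ·)]
  exact List.getElem_mem hi

lemma qfac_dvd (q i : ℕ) : qfac q i ∣ q := by
  by_cases h : qfac q i = 1
  · exact h ▸ one_dvd q
  · exact Nat.dvd_of_mem_primeFactors (qfac_mem_primeFactors h)

lemma qfac_coprime {q i j : ℕ} (hij : i ≠ j) : (qfac q i).Coprime (qfac q j) := by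
  by_cases hi : qfac q i = 1
  · exact hi ▸ Nat.coprime_one_left _
  by_cases hj : qfac q j = 1
  · exact hj ▸ Nat.coprime_one_right _
  obtain ⟨hi', hi0, heqi⟩ := qfac_eq_getElem_of_ne_one hi
  obtain ⟨hj', hj0, heqj⟩ := qfac_eq_getElem_of_ne_one hj
  have hne : qfac q i ≠ qfac q j := by
    rw [heqi, heqj, ne_eq, (Finset.sort_nodup _ _).getElem_inj_iff]
    omega
  exact (Nat.coprime_primes (Nat.prime_of_mem_primeFactors (qfac_mem_primeFactors hi))
    (Nat.prime_of_mem_primeFactors (qfac_mem_primeFactors hj))).mpr hne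

lemma dvd_qfac_mul_qfac_mul_sbrack (q : ℕ) {n : ℕ} (σ : Fin n → ℕ) (i j : Fin n) :
    q ∣ qfac q (σ i) * qfac q (σ j) * sbrack q σ i j := by
  unfold sbrack
  split_ifs with h
  · rw [Nat.mul_div_cancel' ((qfac_coprime h).mul_dvd_of_dvd_of_dvd (qfac_dvd _ _) (qfac_dvd _ _))]
  · rw [not_not.mp h, mul_comm, ← mul_assoc, Nat.div_mul_cancel (qfac_dvd _ _)]
    exact dvd_mul_right q _

lemma sum_mul_sum_eq_sum_tensor_add_sum_defect {ι K R : Type*} [Fintype ι] [CommRing R]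
    [SMul K R] [IsScalarTower K R R] [SMulCommClass K R R]
    (lam : ι → ι → ι → K) (y a b : ι → R) :
    (∑ i, a i * y i) * (∑ j, b j * y j)
      = (∑ k, (∑ i, ∑ j, lam i j k • (a i * b j)) * y k)
        + ∑ i, ∑ j, a i * b j * (y i * y j - ∑ k, lam i j k • y k) := by
  have hmix : ∑ k, (∑ i, ∑ j, lam i j k • (a i * b j)) * y k
      = ∑ i, ∑ j, a i * b j * ∑ k, lam i j k • y k := by
    simp only [Finset.sum_mul, Finset.mul_sum, smul_mul_assoc, mul_smul_comm]
    rw [Finset.sum_comm]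
    exact Finset.sum_congr rfl fun i _ => Finset.sum_comm
  rw [hmix, ← Finset.sum_add_distrib, Finset.sum_mul_sum]
  refine Finset.sum_congr rfl fun i _ => ?_
  rw [← Finset.sum_add_distrib]
  exact Finset.sum_congr rfl fun j _ => by ring

lemma ZMod.mul_mul_eq_zero_of_dvd {q a b c : ℕ} {r s t : ZMod q} (hr : (a : ZMod q) ∣ r)
    (hs : (b : ZMod q) ∣ s) (ht : (c : ZMod q) ∣ t) (habc : q ∣ a * b * c) : r * s * t = 0 := by
  rw [← zero_dvd_iff, ← (ZMod.natCast_eq_zero_iff _ q).mpr habc]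
  push_cast
  exact mul_dvd_mul (mul_dvd_mul hr hs) ht

theorem stmt9_general (C : ArithChannel) (n : ℕ) (σ : Fin n → ℕ)
    (x : Fin n → Polynomial ℤ)
    (lam : Fin n → Fin n → Fin n → ZMod C.q)
    (hlam : ∀ i j, ∃ t : ZMod C.q,
      C.ev (C.toRq (x i) * C.toRq (x j) - ∑ k, lam i j k • C.toRq (x k))
        = ((sbrack C.q σ i j : ℕ) : ZMod C.q) * t)
    (v₁ v₂ : Fin n → C.Rq)
    (hv₁ : C.InSigma σ v₁) (hv₂ : C.InSigma σ v₂) :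
    ∃ e : C.Rq, C.ev e = 0 ∧
      (∑ i, v₁ i * C.toRq (x i)) * (∑ j, v₂ j * C.toRq (x j))
        = (∑ k, (∑ i, ∑ j, lam i j k • (v₁ i * v₂ j)) * C.toRq (x k)) + e := by
  refine ⟨_, ?_, sum_mul_sum_eq_sum_tensor_add_sum_defect lam (fun i => C.toRq (x i)) v₁ v₂⟩
  simp only [map_sum, map_mul]
  refine Finset.sum_eq_zero fun i _ => Finset.sum_eq_zero fun j _ => ?_
  obtain ⟨t₁, h₁⟩ := hv₁ i
  obtain ⟨t₂, h₂⟩ := hv₂ j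
  obtain ⟨t, ht⟩ := hlam i j
  exact ZMod.mul_mul_eq_zero_of_dvd (Dvd.intro _ h₁.symm) (Dvd.intro _ h₂.symm)
    (Dvd.intro _ ht.symm) (dvd_qfac_mul_qfac_mul_sbrack C.q σ i j)

/-- Given `λ ∈ H(x|C,σ)` (a 3-tensor over `Z_q` whose defects `e_{i,j}` evaluate under
`⟦C⟧` to multiples of `σ[q]_{i,j}`), for all vectors `v₁, v₂ ∈ σZ_q[X]_u` there exists
`e` with `⟦C⟧(e) = 0` such that `(v₁ᵀx)·(v₂ᵀx) = (v₁ ⊠_λ v₂)ᵀx + e`. -/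
theorem stmt9 (C : ArithChannel) (n : ℕ) (σ : Fin n → ℕ)
    (hσ : ∀ i, σ i ≤ (Nat.primeFactors C.q).card)
    (x : Fin n → Polynomial ℤ)
    (lam : Fin n → Fin n → Fin n → ZMod C.q)
    (hlam : ∀ i j, ∃ t : ZMod C.q,
      C.ev (C.toRq (x i) * C.toRq (x j) - ∑ k, lam i j k • C.toRq (x k))
        = ((sbrack C.q σ i j : ℕ) : ZMod C.q) * t)
    (v₁ v₂ : Fin n → C.Rq)
    (hv₁ : C.InSigma σ v₁) (hv₂ : C.InSigma σ v₂) :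
    ∃ e : C.Rq, C.ev e = 0 ∧
      (∑ i, v₁ i * C.toRq (x i)) * (∑ j, v₂ j * C.toRq (x j))
        = (∑ k, (∑ i, ∑ j, lam i j k • (v₁ i * v₂ j)) * C.toRq (x k)) + e :=
  stmt9_general C n σ x lam hlam v₁ v₂ hv₁ hv₂
end

section
/- Let C = (p,q,ω,u) be an arithmetic channel, σ an n-repartition of q, x ∈ (Z[X])^n, m ∈ Z_p (viewed in Z_q via ι_p followed by π_q), and k a nonnegative integer with k < (q+1)/p − 1. If (c,c') ∈ S^x_{C,k}(m|σ), then the decryption D(cᵀx, c') = π_p(ι_q(⟦C⟧(c' − cᵀx))) equals m. -/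
open Polynomial

/-- Decryption correctness: for `m ∈ Z_p` (viewed in `Z_q`), `k < (q+1)/p − 1`, and
`(c,c') ∈ S^x_{C,k}(m|σ)`, the decryption `π_p(ι_q(⟦C⟧(c' − cᵀx)))` equals `m`. -/
theorem stmt11 (C : ArithChannel) (n : ℕ) (σ : Fin n → ℕ)
    (hσ : ∀ i, σ i ≤ (Nat.primeFactors C.q).card)
    (x : Fin n → Polynomial ℤ) (m : ZMod C.p) (k : ℕ)
    (hk : (k : ℚ) < ((C.q : ℚ) + 1) / C.p - 1)
    (c : Fin n → C.Rq) (c' : C.Rq)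
    (h : C.Enc σ x k ((m.val : ZMod C.q)) c c') :
    (((C.ev (c' - ∑ i, c i * C.toRq (x i))).val : ZMod C.p)) = m := by
  haveI : NeZero C.q := ⟨C.hq.ne'⟩
  haveI : NeZero C.p := ⟨C.hp.ne'⟩
  obtain ⟨-, r, hr, e, ⟨j, hj, hje⟩, hc'⟩ := h
  have hdiff : c' - ∑ i, c i * C.toRq (x i) = r (m.val : ZMod C.q) + e := by
    rw [hc']; ring
  have hev : C.ev (c' - ∑ i, c i * C.toRq (x i)) = ((m.val : ZMod C.q)) + C.ev e := by
    rw [hdiff, map_add, hr]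
  have hje' : (C.ev e).val = j * C.p := by exact_mod_cast hje
  have hp : (0:ℚ) < C.p := by exact_mod_cast C.hp
  have h1 : (((k+1) * C.p : ℕ) : ℚ) < (C.q : ℚ) + 1 := by
    have h2 : ((k:ℚ)+1) < ((C.q:ℚ)+1)/C.p := by linarith
    push_cast
    calc ((k:ℚ)+1)*C.p < (((C.q:ℚ)+1)/C.p)*C.p := mul_lt_mul_of_pos_right h2 hp
      _ = (C.q:ℚ)+1 := div_mul_cancel₀ _ hp.ne'
  have hkp : (k + 1) * C.p ≤ C.q := by exact_mod_cast Nat.lt_succ_iff.mp (by exact_mod_cast h1)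
  have mval : m.val < C.p := m.val_lt
  have hjk : j * C.p ≤ k * C.p := Nat.mul_le_mul_right _ hj
  have hsum_lt : m.val + j * C.p < C.q := by
    have : (k+1) * C.p = k * C.p + C.p := by ring
    omega
  have hval : (C.ev (c' - ∑ i, c i * C.toRq (x i))).val = m.val + j * C.p := by
    rw [hev, ZMod.val_add, hje', ZMod.val_natCast_of_lt (lt_of_lt_of_le mval (le_of_lt C.hpq))]
    exact Nat.mod_eq_of_lt hsum_lt
  rw [hval]
  push_cast
  simp [ZMod.natCast_self, ZMod.natCast_val, ZMod.cast_id]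
end

section
/- Let C = (p,q,ω,u) be an arithmetic channel, σ an n-repartition of q, x ∈ (Z[X])^n. For messages m₁, m₂ ∈ Z_q, nonnegative integers k₁, k₂ with k₁ + k₂ < q/p, and ciphertexts (c₁,c₁') ∈ S^x_{C,k₁}(m₁|σ) and (c₂,c₂') ∈ S^x_{C,k₂}(m₂|σ), the componentwise sum (c₁+c₂, c₁'+c₂') lies in S^x_{C,k₁+k₂}(m₁+m₂|σ). -/
open Polynomial

/-- Homomorphic addition: if `(c₁,c₁') ∈ S^x_{C,k₁}(m₁|σ)`, `(c₂,c₂') ∈ S^x_{C,k₂}(m₂|σ)`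
and `k₁ + k₂ < q/p`, then `(c₁+c₂, c₁'+c₂') ∈ S^x_{C,k₁+k₂}(m₁+m₂|σ)`. -/
theorem stmt13 (C : ArithChannel) (n : ℕ) (σ : Fin n → ℕ)
    (hσ : ∀ i, σ i ≤ (Nat.primeFactors C.q).card)
    (x : Fin n → Polynomial ℤ) (m₁ m₂ : ZMod C.q) (k₁ k₂ : ℕ)
    (hk : (k₁ : ℚ) + (k₂ : ℚ) < (C.q : ℚ) / C.p)
    (c₁ c₂ : Fin n → C.Rq) (c₁' c₂' : C.Rq)
    (h₁ : C.Enc σ x k₁ m₁ c₁ c₁') (h₂ : C.Enc σ x k₂ m₂ c₂ c₂') :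
    C.Enc σ x (k₁ + k₂) (m₁ + m₂) (fun i => c₁ i + c₂ i) (c₁' + c₂') := by
  obtain ⟨hs₁, r₁, hr₁, e₁, ⟨j₁, hj₁, hv₁⟩, heq₁⟩ := h₁
  obtain ⟨hs₂, r₂, hr₂, e₂, ⟨j₂, hj₂, hv₂⟩, heq₂⟩ := h₂
  refine ⟨?_, fun m => if m = m₁ + m₂ then r₁ m₁ + r₂ m₂ else r₁ m, ?_, e₁ + e₂, ?_, ?_⟩
  · intro i
    obtain ⟨t₁, ht₁⟩ := hs₁ i
    obtain ⟨t₂, ht₂⟩ := hs₂ i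
    exact ⟨t₁ + t₂, by simp [map_add, ht₁, ht₂, mul_add]⟩
  · intro m
    by_cases h : m = m₁ + m₂ <;> simp [h, map_add, hr₁ m₁, hr₂ m₂, hr₁ m]
  · refine ⟨j₁ + j₂, add_le_add hj₁ hj₂, ?_⟩
    have hq : 0 < C.q := C.hq
    have hkp : ((k₁ : ℚ) + k₂) * C.p < C.q := by
      rw [← lt_div_iff₀ (by exact_mod_cast C.hp)]
      exact hk
    have hkpn : (k₁ + k₂) * C.p < C.q := by exact_mod_cast hkp
    have hlt : (C.ev e₁).val + (C.ev e₂).val < C.q := by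
      have h1 : (C.ev e₁).val = j₁ * C.p := by exact_mod_cast hv₁
      have h2 : (C.ev e₂).val = j₂ * C.p := by exact_mod_cast hv₂
      rw [h1, h2, ← add_mul]
      calc (j₁ + j₂) * C.p ≤ (k₁ + k₂) * C.p :=
            Nat.mul_le_mul_right _ (add_le_add hj₁ hj₂)
        _ < C.q := hkpn
    have := ZMod.val_add_of_lt hlt
    rw [map_add, this]
    push_cast
    rw [hv₁, hv₂]
    push_cast
    ring
  · simp only [if_pos rfl]
    rw [heq₁, heq₂]
    simp [add_mul, Finset.sum_add_distrib]
    ring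
end
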